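/- Suppose S=(s_i) is a good orientable sequence of order n with odd weight and period m, and let T ∈ D^{-1}(S). Then E(T) is a good orientable sequence of order n+1 of odd weight, whose period is 2m if m is odd and 2m+1 if m is even. -/

import Mathlib

/-- A sequence has `m` as a (not necessarily least) period. -/
def hasPer (s : ℕ → Bool) (m : ℕ) : Prop := ∀ i, s (i + m) = s i

/-- `m` is the (least positive) period of `s`. -/
def isPeriod (s : ℕ → Bool) (m : ℕ) : Prop :=
  0 < m ∧ hasPer s m ∧ ∀ k, 0 < k → hasPer s k → m ≤ k

/-- The `n`-tuple appearing at position `i` of `s`. -/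
def tup (s : ℕ → Bool) (n i : ℕ) : Fin n → Bool := fun k => s (i + (k : ℕ))

/-- The reverse of an `n`-tuple. -/
def tupRev {n : ℕ} (u : Fin n → Bool) : Fin n → Bool := fun k => u k.rev

/-- An `n`-window sequence of period `m`. -/
def isNWindow (s : ℕ → Bool) (n m : ℕ) : Prop :=
  isPeriod s m ∧ ∀ i j, tup s n i = tup s n j → i ≡ j [MOD m]

/-- The weight of (one period of) `s`. -/
def wt (s : ℕ → Bool) (m : ℕ) : ℕ := ∑ i ∈ Finset.range m, (if s i then 1 else 0)

/-- The complement of a sequence. -/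
def seqCompl (s : ℕ → Bool) : ℕ → Bool := fun i => !(s i)

/-- Two sequences are disjoint if they share no `n`-tuple. -/
def disjointSeq (s t : ℕ → Bool) (n : ℕ) : Prop := ∀ i j, tup s n i ≠ tup t n j

/-- A sequence is primitive if it is disjoint from its complement. -/
def primitiveSeq (s : ℕ → Bool) (n : ℕ) : Prop := disjointSeq s (seqCompl s) n

/-- An orientable sequence of order `n` and period `m`. -/
def isOrientable (s : ℕ → Bool) (n m : ℕ) : Prop :=
  isNWindow s n m ∧ ∀ i j, tup s n i ≠ tupRev (tup s n j)

/-- Two sequences are o-disjoint: disjoint, and no `n`-tuple of one is the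
reverse of an `n`-tuple of the other. -/
def oDisjoint (s t : ℕ → Bool) (n : ℕ) : Prop :=
  disjointSeq s t n ∧ ∀ i j, tup s n i ≠ tupRev (tup t n j)

/-- The Lempel homomorphism `D` on periodic sequences. -/
def Dmap (t : ℕ → Bool) : ℕ → Bool := fun i => xor (t i) (t (i + 1))

/-- The set `D⁻¹(s)` of sequences mapping to `s` under `D`. -/
def Dinv (s : ℕ → Bool) : Set (ℕ → Bool) := { t | Dmap t = s }

/-- `1^len` occurs at position `i` of `s`. -/
def occOnes (s : ℕ → Bool) (len i : ℕ) : Prop := ∀ k, k < len → s (i + k) = true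

/-- `0^len` occurs at position `i` of `s`. -/
def occZeros (s : ℕ → Bool) (len i : ℕ) : Prop := ∀ k, k < len → s (i + k) = false

/-- The periodic sequence of period dividing `m + 1` obtained from the generating cycle
`[s_0, ..., s_{r-1}, 1, s_r, ..., s_{m-1}]`, i.e. by inserting an extra `1` at
position `r` of the generating cycle `[s_0, ..., s_{m-1}]`. -/
def insertAt (s : ℕ → Bool) (m r : ℕ) : ℕ → Bool := fun i =>
  if i % (m + 1) < r then s (i % (m + 1))
  else if i % (m + 1) = r then true
  else s (i % (m + 1) - 1)

/-- A good orientable sequence: an `OS(n)` of period `m` in which the tuple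
`0^(n-4)` occurs exactly once in a period. -/
def goodOS (s : ℕ → Bool) (n m : ℕ) : Prop :=
  isOrientable s n m ∧ ∃! i, i < m ∧ occZeros s (n - 4) i

/-!
Because `w(S)` is odd, every `T ∈ D⁻¹(S)` is antiperiodic, `t (i + m) = !t i`; so `T` has
period `2m` and weight `m`. An `(n+1)`-window of `T` determines the `n`-window of `S` at the same
position together with its first bit, hence `T` is an `OS(n+1)` of period `2m`. A run of
`n - 3` equal bits of `T` lies over an occurrence of `0^(n-4)` in `S`, and antiperiodicity leaves
exactly one run `1^(n-3)` and one run `0^(n-3)` per period. If `m` is odd, `E(T) = T`.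

If `m` is even, `E(T)` lengthens the unique block `0 1^(n-3) 0` of `T` to `0 1^(n-2) 0`. Each
`(n+1)`-window of `E(T)` is either a window of `T`, which never contains `1^(n-2)`, or contains the
lengthened run at one of four offsets; as that run occurs once per period, the offset determines
the window. A window equal to a reversed one could then only arise if `T` read
`c 0 1^(n-3) 0 c` around the run, a palindromic window of `T`.
-/

section Windows

variable {f g : ℕ → Bool} {q w L a b : ℕ}

lemma hasPer.periodic (h : hasPer f q) : Function.Periodic f q := h

lemma hasPer.apply_congr (h : hasPer f q) (hab : a ≡ b [MOD q]) : f a = f b := by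
  rw [← h.periodic.map_mod_nat a, ← h.periodic.map_mod_nat b, hab]

lemma tup_eq_iff : tup f w a = tup g w b ↔ ∀ i < w, f (a + i) = g (b + i) :=
  ⟨fun h i hi => congrFun h ⟨i, hi⟩, fun h => funext fun i => h i i.2⟩

lemma tup_eq_tupRev_iff :
    tup f w a = tupRev (tup g w b) ↔ ∀ i < w, f (a + i) = g (b + (w - 1 - i)) := by
  have hrev (i : Fin w) : (i.rev : ℕ) = w - 1 - i := by rw [Fin.val_rev]; omega
  refine ⟨fun h i hi => ?_, fun h => funext fun i => ?_⟩
  · simpa only [tup, tupRev, hrev] using congrFun h ⟨i, hi⟩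
  · simpa only [tup, tupRev, hrev] using h i i.2

lemma tupRev_tupRev (u : Fin w → Bool) : tupRev (tupRev u) = u :=
  funext fun i => by simp [tupRev]

lemma tup_eq_tupRev_comm (h : tup f w a = tupRev (tup g w b)) :
    tup g w b = tupRev (tup f w a) := by
  rw [h, tupRev_tupRev]

lemma hasPer.tup_congr (h : hasPer f q) (hab : a ≡ b [MOD q]) : tup f w a = tup f w b :=
  tup_eq_iff.2 fun _ _ => h.apply_congr (hab.add_right _)

lemma occOnes_of_tup_eq (h : tup f w a = tup g w b) {d : ℕ} (hd : d + L ≤ w)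
    (hocc : occOnes g L (b + d)) : occOnes f L (a + d) := fun i hi => by
  rw [add_assoc, tup_eq_iff.1 h (d + i) (by omega), ← add_assoc]
  exact hocc i hi

lemma occOnes_of_tup_eq_tupRev (h : tup f w a = tupRev (tup g w b)) {d : ℕ} (hd : d + L ≤ w)
    (hocc : occOnes g L (b + d)) : occOnes f L (a + (w - L - d)) := fun i hi => by
  rw [add_assoc, tup_eq_tupRev_iff.1 h _ (by omega),
    show w - 1 - (w - L - d + i) = d + (L - 1 - i) by omega, ← add_assoc]
  exact hocc _ (by omega)

lemma occOnes_iff_of_tup_eq (h : tup f L a = tup g L b) : occOnes f L a ↔ occOnes g L b :=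
  forall₂_congr fun i hi => by rw [tup_eq_iff.1 h i hi]

lemma occZeros_iff_of_tup_eq (h : tup f L a = tup g L b) : occZeros f L a ↔ occZeros g L b :=
  forall₂_congr fun i hi => by rw [tup_eq_iff.1 h i hi]

lemma isPeriod_of_tup_injective (hper : hasPer f q) (hq : 0 < q)
    (hinj : ∀ i j, tup f w i = tup f w j → i ≡ j [MOD q]) : isPeriod f q := by
  refine ⟨hq, hper, fun k hk hperk => Nat.le_of_dvd hk ?_⟩
  have h0k : 0 ≡ k [MOD q] := hinj 0 k (tup_eq_iff.2 fun i _ => by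
    rw [zero_add, add_comm, hperk])
  exact Nat.modEq_zero_iff_dvd.1 h0k.symm

lemma isOrientable_of_tup_injective (hper : hasPer f q) (hq : 0 < q)
    (hinj : ∀ i j, tup f w i = tup f w j → i ≡ j [MOD q])
    (hrev : ∀ i j, tup f w i ≠ tupRev (tup f w j)) : isOrientable f w q :=
  ⟨⟨isPeriod_of_tup_injective hper hq hinj, hinj⟩, hrev⟩

lemma two_le_of_isOrientable (h : isOrientable f w q) : 2 ≤ q := by
  obtain ⟨⟨⟨hq, hper, -⟩, -⟩, hrev⟩ := h
  by_contra hq2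
  obtain rfl : q = 1 := by omega
  have hconst : ∀ i, f i = f 0 := fun i => hper.apply_congr Nat.modEq_one
  exact hrev 0 0 (tup_eq_tupRev_iff.2 fun i _ => by rw [hconst, hconst (0 + _)])

lemma hasPer.occOnes_congr (h : hasPer f q) (hab : a ≡ b [MOD q]) :
    occOnes f L a ↔ occOnes f L b :=
  occOnes_iff_of_tup_eq (h.tup_congr hab)

lemma hasPer.occZeros_congr (h : hasPer f q) (hab : a ≡ b [MOD q]) :
    occZeros f L a ↔ occZeros f L b :=
  occZeros_iff_of_tup_eq (h.tup_congr hab)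

lemma hasPer.exists_forall_occZeros_iff_modEq (h : hasPer f q) (hq : 0 < q)
    (huniq : ∃! i, i < q ∧ occZeros f L i) :
    ∃ z < q, ∀ i, occZeros f L i ↔ i ≡ z [MOD q] := by
  obtain ⟨z, ⟨hz, hocc⟩, hzuniq⟩ := huniq
  refine ⟨z, hz, fun i => ⟨fun hi => ?_, fun hi => (h.occZeros_congr hi).2 hocc⟩⟩
  have : i % q = z := hzuniq _ ⟨Nat.mod_lt i hq, (h.occZeros_congr (Nat.mod_modEq i q)).2 hi⟩
  rw [Nat.ModEq, this, Nat.mod_eq_of_lt hz]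

end Windows

section Residues

variable {q z : ℕ}

lemma exists_lt_modEq_add (hq : 0 < q) (a b : ℕ) : ∃ j < q, a ≡ b + j [MOD q] := by
  refine ⟨(a + (q - b % q)) % q, Nat.mod_lt _ hq, ?_⟩
  calc a ≡ a + q [MOD q] := (Nat.add_mod_right a q).symm
    _ = b % q + (a + (q - b % q)) := by have := Nat.mod_lt b hq; omega
    _ ≡ b + (a + (q - b % q)) % q [MOD q] :=
      (Nat.mod_modEq b q).add (Nat.mod_modEq _ q).symm

lemma eq_of_add_one_add_modEq {p r i : ℕ} (h : r + 1 + i ≡ r [MOD p + 1]) (hi : i ≤ 2 * p) :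
    i = p := by
  have hdvd : p + 1 ∣ 1 + i :=
    Nat.modEq_zero_iff_dvd.1 (Nat.ModEq.add_left_cancel' r (by rwa [← add_assoc]))
  have := Nat.eq_of_dvd_of_lt_two_mul (by omega) hdvd (by omega)
  omega

lemma not_add_modEq_self {r a : ℕ} (ha : 0 < a) (haq : a < q) : ¬r + a ≡ r [MOD q] :=
  fun h => by
    have := Nat.le_of_dvd ha (Nat.modEq_zero_iff_dvd.1 (Nat.ModEq.add_left_cancel' r h))
    omega

lemma existsUnique_lt_of_forall_iff_modEq {P : ℕ → Prop} (hq : 0 < q)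
    (h : ∀ i, P i ↔ i ≡ z [MOD q]) : ∃! i, i < q ∧ P i :=
  ⟨z % q, ⟨Nat.mod_lt z hq, (h _).2 (Nat.mod_modEq z q)⟩,
    fun i ⟨hi, hPi⟩ => (Nat.mod_eq_of_lt hi).symm.trans ((h i).1 hPi)⟩

end Residues

section Lempel

variable {t : ℕ → Bool} {m n : ℕ}

lemma apply_succ_eq_xor_Dmap (t : ℕ → Bool) (i : ℕ) : t (i + 1) = (t i ^^ Dmap t i) := by
  simp [Dmap]

lemma apply_eq_xor_odd_wt_Dmap (t : ℕ → Bool) (j : ℕ) :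
    t j = (t 0 ^^ decide (Odd (wt (Dmap t) j))) := by
  induction j with
  | zero => simp [wt]
  | succ j ih =>
    rw [apply_succ_eq_xor_Dmap t, ih, wt, wt, Finset.sum_range_succ]
    cases Dmap t j <;> simp [Nat.odd_add_one, -Nat.not_odd_iff_even]

lemma antiperiodic_of_odd_wt_Dmap (hper : hasPer (Dmap t) m) (hodd : Odd (wt (Dmap t) m))
    (i : ℕ) : t (i + m) = !t i := by
  induction i with
  | zero => simp [apply_eq_xor_odd_wt_Dmap t m, hodd]
  | succ i ih =>
    rw [add_right_comm, apply_succ_eq_xor_Dmap t, ih, hper, apply_succ_eq_xor_Dmap t i,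
      Bool.not_xor]

lemma hasPer_two_mul_of_antiperiodic (hanti : ∀ i, t (i + m) = !t i) : hasPer t (2 * m) :=
  fun i => by rw [two_mul, ← add_assoc, hanti, hanti, Bool.not_not]

lemma apply_add_mul_of_antiperiodic (hanti : ∀ i, t (i + m) = !t i) (i q : ℕ) :
    t (i + m * q) = (t i ^^ decide (Odd q)) := by
  induction q with
  | zero => simp
  | succ q ih =>
    rw [mul_add_one, ← add_assoc, hanti, ih]
    simp [Nat.odd_add_one, -Nat.not_odd_iff_even]

lemma modEq_two_mul_of_antiperiodic (hanti : ∀ i, t (i + m) = !t i) {i j : ℕ}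
    (hij : i ≡ j [MOD m]) (htij : t i = t j) : i ≡ j [MOD 2 * m] := by
  wlog hle : i ≤ j generalizing i j
  · exact (this hij.symm htij.symm (by omega)).symm
  obtain ⟨q, hq⟩ := (Nat.modEq_iff_dvd' hle).1 hij
  obtain rfl : j = i + m * q := by omega
  rw [apply_add_mul_of_antiperiodic hanti] at htij
  obtain ⟨c, rfl⟩ : Even q := by
    by_contra hq
    simp [Nat.not_even_iff_odd.1 hq] at htij
  exact (Nat.modEq_iff_dvd' hle).2 ⟨c, by rw [Nat.add_sub_cancel_left]; ring⟩

lemma wt_two_mul_of_antiperiodic (hanti : ∀ i, t (i + m) = !t i) : wt t (2 * m) = m := by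
  rw [wt, two_mul, Finset.sum_range_add, ← Finset.sum_add_distrib]
  conv_rhs => rw [← Finset.card_range m, Finset.card_eq_sum_ones]
  refine Finset.sum_congr rfl fun i _ => ?_
  rw [add_comm m, hanti]
  cases t i <;> rfl

lemma Dmap_seqCompl (t : ℕ → Bool) : Dmap (seqCompl t) = Dmap t :=
  funext fun _ => Bool.not_xor_not _ _

lemma occZeros_iff_occOnes_seqCompl {L x : ℕ} : occZeros t L x ↔ occOnes (seqCompl t) L x := by
  simp [occZeros, occOnes, seqCompl]

lemma tup_Dmap_eq {i j : ℕ} (h : tup t (n + 1) i = tup t (n + 1) j) :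
    tup (Dmap t) n i = tup (Dmap t) n j := by
  rw [tup_eq_iff] at h ⊢
  intro x hx
  simp only [Dmap, add_assoc, h x (by omega), h (x + 1) (by omega)]

lemma tup_Dmap_eq_tupRev {i j : ℕ} (h : tup t (n + 1) i = tupRev (tup t (n + 1) j)) :
    tup (Dmap t) n i = tupRev (tup (Dmap t) n j) := by
  rw [tup_eq_tupRev_iff] at h ⊢
  intro x hx
  simp only [Dmap, add_assoc, h x (by omega), h (x + 1) (by omega),
    show j + (n - 1 - x) + 1 = j + (n + 1 - 1 - x) by omega,
    show n + 1 - 1 - (x + 1) = n - 1 - x by omega, Bool.xor_comm]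

lemma occOnes_succ_iff_occZeros_Dmap {N x : ℕ} :
    occOnes t (N + 1) x ↔ t x = true ∧ occZeros (Dmap t) N x := by
  refine ⟨fun h => ⟨h 0 N.succ_pos, fun i hi => ?_⟩, fun ⟨h0, hD⟩ i hi => ?_⟩
  · have h1 := h (i + 1) (by omega)
    rw [← add_assoc] at h1
    simp [Dmap, h i (by omega), h1]
  · induction i with
    | zero => exact h0
    | succ i ih =>
      rw [← add_assoc, apply_succ_eq_xor_Dmap t, ih (by omega), hD i (by omega)]
      rfl

lemma isOrientable_of_Dmap (hs : isOrientable (Dmap t) n m) (hanti : ∀ i, t (i + m) = !t i) :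
    isOrientable t (n + 1) (2 * m) := by
  refine isOrientable_of_tup_injective (hasPer_two_mul_of_antiperiodic hanti)
    (by have := hs.1.1.1; omega) (fun i j h => ?_) (fun i j h => hs.2 i j (tup_Dmap_eq_tupRev h))
  exact modEq_two_mul_of_antiperiodic hanti (hs.1.2 i j (tup_Dmap_eq h))
    (by simpa using tup_eq_iff.1 h 0 n.succ_pos)

lemma exists_forall_occOnes_iff_modEq (hanti : ∀ i, t (i + m) = !t i) {N z : ℕ} (hz : z < m)
    (hs : ∀ i, occZeros (Dmap t) N i ↔ i ≡ z [MOD m]) :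
    ∃ r < 2 * m, ∀ i, occOnes t (N + 1) i ↔ i ≡ r [MOD 2 * m] := by
  obtain ⟨r, hr, htr, hrz⟩ : ∃ r < 2 * m, t r = true ∧ r ≡ z [MOD m] := by
    cases h : t z
    · exact ⟨z + m, by omega, by rw [hanti, h]; rfl, Nat.add_mod_right z m⟩
    · exact ⟨z, by omega, h, rfl⟩
  refine ⟨r, hr, fun i => ?_⟩
  rw [occOnes_succ_iff_occZeros_Dmap, hs]
  constructor
  · rintro ⟨hti, hiz⟩
    exact modEq_two_mul_of_antiperiodic hanti (hiz.trans hrz.symm) (hti.trans htr.symm)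
  · intro hir
    exact ⟨((hasPer_two_mul_of_antiperiodic hanti).apply_congr hir).trans htr,
      (hir.of_mul_left 2).trans hrz⟩

end Lempel

section Insertion

variable {t : ℕ → Bool} {p r k : ℕ}

lemma insertAt_hasPer : hasPer (insertAt t p r) (p + 1) := fun x => by
  simp only [insertAt, Nat.add_mod_right]

lemma insertAt_apply_self (hr : r ≤ p) : insertAt t p r r = true := by
  simp [insertAt, Nat.mod_eq_of_lt (Nat.lt_succ_of_le hr)]

lemma insertAt_apply_of_lt {i : ℕ} (hi : i < r) (hr : r ≤ p) : insertAt t p r i = t i := by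
  simp [insertAt, Nat.mod_eq_of_lt (show i < p + 1 by omega), hi]

lemma insertAt_apply_add_one_add_of_le {j : ℕ} (hj : r + 1 + j ≤ p) :
    insertAt t p r (r + 1 + j) = t (r + j) := by
  simp [insertAt, Nat.mod_eq_of_lt (show r + 1 + j < p + 1 by omega),
    show ¬r + 1 + j < r by omega, show r + 1 + j ≠ r by omega,
    show r + 1 + j - 1 = r + j by omega]

lemma insertAt_apply_add_one_add (hper : hasPer t p) (hr : r < p) {j : ℕ} (hj : j < p) :
    insertAt t p r (r + 1 + j) = t (r + j) := by
  rcases Nat.lt_or_ge (r + 1 + j) (p + 1) with h | h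
  · exact insertAt_apply_add_one_add_of_le (by omega)
  · have hmod : (r + 1 + j) % (p + 1) = r + j - p := by
      rw [show r + 1 + j = r + j - p + (p + 1) by omega, Nat.add_mod_right,
        Nat.mod_eq_of_lt (by omega)]
    simp only [insertAt, hmod, if_pos (show r + j - p < r by omega)]
    rw [← hper, Nat.sub_add_cancel (by omega)]

lemma wt_insertAt (hr : r ≤ p) : wt (insertAt t p r) (p + 1) = wt t p + 1 := by
  have hlow : ∑ i ∈ Finset.range r, (if insertAt t p r i then 1 else 0)
      = ∑ i ∈ Finset.range r, (if t i then 1 else 0) :=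
    Finset.sum_congr rfl fun i hi => by rw [insertAt_apply_of_lt (Finset.mem_range.1 hi) hr]
  have hhigh : ∑ j ∈ Finset.range (p - r), (if insertAt t p r (r + (1 + j)) then 1 else 0)
      = ∑ j ∈ Finset.range (p - r), (if t (r + j) then 1 else 0) :=
    Finset.sum_congr rfl fun j hj => by
      rw [← add_assoc, insertAt_apply_add_one_add_of_le (by simp at hj; omega)]
  rw [wt, wt, show p + 1 = r + (1 + (p - r)) by omega, Finset.sum_range_add,
    Finset.sum_range_add, Finset.sum_range_one, add_zero, insertAt_apply_self hr, hlow, hhigh]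
  conv_rhs => rw [← Nat.add_sub_cancel' hr, Finset.sum_range_add]
  simp only [if_true]
  omega

end Insertion

section UniqueRun

variable {t : ℕ → Bool} {p r k : ℕ}

lemma run_succ_eq_false (hp : 2 ≤ p) (hrun : ∀ i, occOnes t (k + 1) i ↔ i ≡ r [MOD p]) :
    t (r + (k + 1)) = false := by
  by_contra h
  refine not_add_modEq_self one_pos (by omega) ((hrun (r + 1)).1 fun i hi => ?_)
  rcases Nat.lt_or_ge i k with hik | hik
  · rw [add_assoc]; exact (hrun r).2 rfl _ (by omega)
  · rw [show r + 1 + i = r + (k + 1) by omega]; simpa using h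

lemma run_pred_eq_false (hper : hasPer t p) (hp : 2 ≤ p)
    (hrun : ∀ i, occOnes t (k + 1) i ↔ i ≡ r [MOD p]) : t (r + (p - 1)) = false := by
  by_contra h
  refine not_add_modEq_self (a := p - 1) (by omega) (by omega) ((hrun _).1 fun i hi => ?_)
  rcases i with _ | i
  · simpa using h
  · rw [show r + (p - 1) + (i + 1) = r + i + p by omega, hper]; exact (hrun r).2 rfl _ (by omega)

lemma succ_lt_of_run (hper : hasPer t p) (hp : 2 ≤ p)
    (hrun : ∀ i, occOnes t (k + 1) i ↔ i ≡ r [MOD p]) : k + 1 < p := by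
  by_contra h
  have := run_succ_eq_false hp hrun
  rw [show r + (k + 1) = r + (k + 1 - p) + p by omega, hper, (hrun r).2 rfl _ (by omega)] at this
  exact Bool.noConfusion this

lemma not_occOnes_add_two (hp : 2 ≤ p) (hrun : ∀ i, occOnes t (k + 1) i ↔ i ≡ r [MOD p])
    (x : ℕ) : ¬occOnes t (k + 2) x := fun h =>
  not_add_modEq_self one_pos (by omega)
    (((hrun (x + 1)).1 fun i _ => by rw [add_assoc]; exact h _ (by omega)).trans
      ((hrun x).1 fun i _ => h i (by omega)).symm)

lemma run_pred_pred_ne (hper : hasPer t p) (hp : 2 ≤ p)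
    (hrun : ∀ i, occOnes t (k + 1) i ↔ i ≡ r [MOD p])
    (hrev : ∀ i j, tup t (k + 5) i ≠ tupRev (tup t (k + 5) j)) :
    t (r + (p - 2)) ≠ t (r + (k + 2)) := by
  intro heq
  have hshift (i : ℕ) (hi : 2 ≤ i) : t (r + (p - 2) + i) = t (r + (i - 2)) := by
    rw [show r + (p - 2) + i = r + (i - 2) + p by omega, hper]
  have hval (i : ℕ) (hi : i ≤ k + 4) : t (r + (p - 2) + i) =
      if i = 0 ∨ i = k + 4 then t (r + (p - 2)) else decide (2 ≤ i ∧ i ≤ k + 2) := by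
    obtain rfl | rfl | ⟨h2, hk⟩ | rfl | rfl :
        i = 0 ∨ i = 1 ∨ (2 ≤ i ∧ i ≤ k + 2) ∨ i = k + 3 ∨ i = k + 4 := by omega
    · simp
    · rw [if_neg (by omega), show r + (p - 2) + 1 = r + (p - 1) by omega,
        run_pred_eq_false hper hp hrun]
      simp
    · rw [if_neg (by omega), hshift i h2, (hrun r).2 rfl _ (by omega)]
      simp [h2, hk]
    · rw [if_neg (by omega), hshift _ (by omega), show k + 3 - 2 = k + 1 by omega,
        run_succ_eq_false hp hrun]
      simp
    · rw [if_pos (by omega), hshift _ (by omega), show k + 4 - 2 = k + 2 by omega, heq]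
  refine hrev (r + (p - 2)) (r + (p - 2)) (tup_eq_tupRev_iff.2 fun i hi => ?_)
  rw [hval i (by omega), hval _ (by omega)]
  simp only [show k + 5 - 1 - i = 0 ∨ k + 5 - 1 - i = k + 4 ↔ i = 0 ∨ i = k + 4 by omega,
    show 2 ≤ k + 5 - 1 - i ∧ k + 5 - 1 - i ≤ k + 2 ↔ 2 ≤ i ∧ i ≤ k + 2 by omega]

lemma three_le_of_run (hper : hasPer t p) (hp : 2 ≤ p)
    (hrun : ∀ i, occOnes t (k + 1) i ↔ i ≡ r [MOD p])
    (hrev : ∀ i j, tup t (k + 5) i ≠ tupRev (tup t (k + 5) j)) : 3 ≤ p := by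
  by_contra h
  obtain rfl : p = 2 := by omega
  obtain rfl : k = 0 := by have := succ_lt_of_run hper hp hrun; omega
  exact run_pred_pred_ne hper hp hrun hrev (hper r).symm

end UniqueRun

section InsertionIntoRun

variable {t : ℕ → Bool} {p r k : ℕ}

lemma insertAt_apply_add_one_add_of_run (hper : hasPer t p) (hp : 2 ≤ p) (hr : r < p)
    (hrun : ∀ i, occOnes t (k + 1) i ↔ i ≡ r [MOD p]) {j : ℕ} (hj : j < p + k + 1) :
    insertAt t p r (r + 1 + j) = t (r + j) := by
  rcases Nat.lt_or_ge j p with hjp | hjp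
  · exact insertAt_apply_add_one_add hper hr hjp
  -- past the inserted bit both sides read the run of ones
  obtain ⟨i, rfl⟩ : ∃ i, j = p + i := ⟨j - p, by omega⟩
  rw [show r + 1 + (p + i) = r + i + (p + 1) by omega, insertAt_hasPer,
    show r + (p + i) = r + i + p by omega, hper, (hrun r).2 rfl i (by omega)]
  rcases i with _ | i
  · exact insertAt_apply_self hr.le
  · have := succ_lt_of_run hper hp hrun
    rw [show r + (i + 1) = r + 1 + i by omega, insertAt_apply_add_one_add hper hr (by omega)]
    exact (hrun r).2 rfl i (by omega)

lemma tup_insertAt_add_one_add (hper : hasPer t p) (hp : 2 ≤ p) (hr : r < p)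
    (hrun : ∀ i, occOnes t (k + 1) i ↔ i ≡ r [MOD p]) {L j : ℕ} (hj : j + L ≤ p + k + 1) :
    tup (insertAt t p r) L (r + 1 + j) = tup t L (r + j) :=
  tup_eq_iff.2 fun i _ => by
    rw [add_assoc (r + 1) j i, add_assoc r j i,
      insertAt_apply_add_one_add_of_run hper hp hr hrun (by omega)]

lemma occOnes_insertAt_iff (hper : hasPer t p) (hp : 2 ≤ p) (hr : r < p)
    (hrun : ∀ i, occOnes t (k + 1) i ↔ i ≡ r [MOD p]) (x : ℕ) :
    occOnes (insertAt t p r) (k + 2) x ↔ x ≡ r [MOD p + 1] := by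
  constructor
  · intro hx
    obtain ⟨j, hj, hxj⟩ := exists_lt_modEq_add (Nat.succ_pos p) x (r + 1)
    rw [insertAt_hasPer.occOnes_congr hxj] at hx
    rcases Nat.lt_or_ge j p with hjp | hjp
    · rw [occOnes_iff_of_tup_eq (tup_insertAt_add_one_add hper hp hr hrun (by omega))] at hx
      exact absurd hx (not_occOnes_add_two hp hrun (r + j))
    · rw [show j = p by omega, show r + 1 + p = r + (p + 1) by omega] at hxj
      exact hxj.trans (Nat.add_mod_right r (p + 1))
  · intro hx
    rw [insertAt_hasPer.occOnes_congr hx]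
    rintro (_ | i) hi
    · exact insertAt_apply_self hr.le
    · have := succ_lt_of_run hper hp hrun
      rw [show r + (i + 1) = r + 1 + i by omega,
        insertAt_apply_add_one_add_of_run hper hp hr hrun (by omega)]
      exact (hrun r).2 rfl i (by omega)

lemma exists_forall_occZeros_insertAt_iff (hper : hasPer t p) (hp : 2 ≤ p) (hr : r < p)
    (hrun : ∀ i, occOnes t (k + 1) i ↔ i ≡ r [MOD p]) {z : ℕ}
    (hz : ∀ i, occZeros t (k + 1) i ↔ i ≡ z [MOD p]) :
    ∃ z', ∀ i, occZeros (insertAt t p r) (k + 1) i ↔ i ≡ z' [MOD p + 1] := by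
  obtain ⟨j, hj, hzj⟩ := exists_lt_modEq_add (by omega : 0 < p) z r
  refine ⟨r + 1 + j, fun i => ?_⟩
  obtain ⟨j', hj', hij'⟩ := exists_lt_modEq_add p.succ_pos i (r + 1)
  rw [insertAt_hasPer.occZeros_congr hij',
    occZeros_iff_of_tup_eq (tup_insertAt_add_one_add hper hp hr hrun (by omega)), hz]
  suffices r + j' ≡ z [MOD p] ↔ j' = j by
    rw [this]
    refine ⟨fun h => h ▸ hij', fun h => ?_⟩
    exact (Nat.ModEq.add_left_cancel' (r + 1) (hij'.symm.trans h)).eq_of_lt_of_lt hj' (by omega)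
  refine ⟨fun h => ?_, fun h => h ▸ hzj.symm⟩
  have hj'p : j' ≠ p := by
    rintro rfl
    have := (hz _).2 h 0 k.succ_pos
    rw [add_zero, hper, ← add_zero r, (hrun r).2 rfl 0 k.succ_pos] at this
    exact Bool.noConfusion this
  exact (Nat.ModEq.add_left_cancel' r (h.trans hzj)).eq_of_lt_of_lt (by omega) hj

variable {j j' : ℕ}

lemma occOnes_insertAt_add_one_add_sub (hper : hasPer t p) (hp : 2 ≤ p) (hr : r < p)
    (hrun : ∀ i, occOnes t (k + 1) i ↔ i ≡ r [MOD p]) (hj' : j' ≤ p) :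
    occOnes (insertAt t p r) (k + 2) (r + 1 + j' + (p - j')) :=
  (occOnes_insertAt_iff hper hp hr hrun _).2 <| by
    rw [show r + 1 + j' + (p - j') = r + (p + 1) by omega]
    exact Nat.add_mod_right r (p + 1)

lemma eq_of_tup_insertAt_eq_of_le (hper : hasPer t p) (hp : 3 ≤ p) (hr : r < p)
    (hrun : ∀ i, occOnes t (k + 1) i ↔ i ≡ r [MOD p]) (hj : j ≤ p) (hj' : j' ≤ p)
    (hpj' : p ≤ j' + 3)
    (h : tup (insertAt t p r) (k + 5) (r + 1 + j) = tup (insertAt t p r) (k + 5) (r + 1 + j')) :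
    j = j' := by
  have hrun' := occOnes_insertAt_iff hper (by omega) hr hrun
  have hocc := occOnes_insertAt_add_one_add_sub hper (by omega) hr hrun hj'
  have hmod := (hrun' _).1 (occOnes_of_tup_eq h (by omega) hocc)
  rw [add_assoc] at hmod
  have := eq_of_add_one_add_modEq hmod (by omega)
  omega

lemma add_eq_of_tup_insertAt_eq_tupRev_of_le (hper : hasPer t p) (hp : 3 ≤ p) (hr : r < p)
    (hrun : ∀ i, occOnes t (k + 1) i ↔ i ≡ r [MOD p]) (hj : j ≤ p) (hj' : j' ≤ p)
    (hpj' : p ≤ j' + 3)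
    (h : tup (insertAt t p r) (k + 5) (r + 1 + j) =
      tupRev (tup (insertAt t p r) (k + 5) (r + 1 + j'))) :
    j + j' + 3 = 2 * p := by
  have hrun' := occOnes_insertAt_iff hper (by omega) hr hrun
  have hocc := occOnes_insertAt_add_one_add_sub hper (by omega) hr hrun hj'
  have hmod := (hrun' _).1 (occOnes_of_tup_eq_tupRev h (by omega) hocc)
  rw [add_assoc] at hmod
  have := eq_of_add_one_add_modEq hmod (by omega)
  omega

lemma tup_insertAt_ne_tupRev_of_add_eq (hper : hasPer t p) (hp : 2 ≤ p) (hr : r < p)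
    (hrun : ∀ i, occOnes t (k + 1) i ↔ i ≡ r [MOD p])
    (hrev : ∀ i j, tup t (k + 5) i ≠ tupRev (tup t (k + 5) j))
    (hj : p ≤ j + 1) (hjp : j ≤ p) (hsum : j + j' + 3 = 2 * p) :
    tup (insertAt t p r) (k + 5) (r + 1 + j) ≠
      tupRev (tup (insertAt t p r) (k + 5) (r + 1 + j')) := by
  intro h
  have := tup_eq_tupRev_iff.1 h (k + 3 + (p - j)) (by omega)
  rw [show r + 1 + j + (k + 3 + (p - j)) = r + 1 + (k + 2) + (p + 1) by omega, insertAt_hasPer,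
    show r + 1 + j' + (k + 5 - 1 - (k + 3 + (p - j))) = r + 1 + (p - 2) by omega,
    insertAt_apply_add_one_add_of_run hper hp hr hrun (by omega),
    insertAt_apply_add_one_add_of_run hper hp hr hrun (by omega)] at this
  exact run_pred_pred_ne hper hp hrun hrev this.symm

theorem isOrientable_insertAt (ht : isOrientable t (k + 5) p) (hr : r < p)
    (hrun : ∀ i, occOnes t (k + 1) i ↔ i ≡ r [MOD p]) :
    isOrientable (insertAt t p r) (k + 5) (p + 1) := by
  have hp := two_le_of_isOrientable ht
  obtain ⟨⟨⟨-, hper, -⟩, hinj⟩, hrev⟩ := ht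
  have hp3 := three_le_of_run hper hp hrun hrev
  have hcanon (a : ℕ) : ∃ j ≤ p, a ≡ r + 1 + j [MOD p + 1] ∧
      tup (insertAt t p r) (k + 5) a = tup (insertAt t p r) (k + 5) (r + 1 + j) := by
    obtain ⟨j, hj, haj⟩ := exists_lt_modEq_add p.succ_pos a (r + 1)
    exact ⟨j, by omega, haj, insertAt_hasPer.tup_congr haj⟩
  -- the window at `r + 1 + j` is one of `t` if `j + 4 ≤ p`, and otherwise contains the
  -- lengthened run `1^(k+2)` at offset `p - j`
  have hlow (j : ℕ) (hj : j + 4 ≤ p) :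
      tup (insertAt t p r) (k + 5) (r + 1 + j) = tup t (k + 5) (r + j) :=
    tup_insertAt_add_one_add hper hp hr hrun (by omega)
  refine isOrientable_of_tup_injective insertAt_hasPer p.succ_pos (fun a b h => ?_)
    (fun a b h => ?_)
  all_goals
    obtain ⟨j, hj, haj, hja⟩ := hcanon a
    obtain ⟨j', hj', hbj', hj'b⟩ := hcanon b
    rw [hja, hj'b] at h
  · suffices j = j' from haj.trans (this ▸ hbj'.symm)
    by_cases hs' : p ≤ j' + 3
    · exact eq_of_tup_insertAt_eq_of_le hper hp3 hr hrun hj hj' hs' h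
    by_cases hs : p ≤ j + 3
    · exact (eq_of_tup_insertAt_eq_of_le hper hp3 hr hrun hj' hj hs h.symm).symm
    have := hinj _ _ ((hlow j (by omega)).symm.trans (h.trans (hlow j' (by omega))))
    exact (Nat.ModEq.add_left_cancel' r this).eq_of_lt_of_lt (by omega) (by omega)
  · by_cases hs' : p ≤ j' + 3
    · have hsum := add_eq_of_tup_insertAt_eq_tupRev_of_le hper hp3 hr hrun hj hj' hs' h
      rcases le_or_gt p (j + 1) with hj1 | hj1
      · exact tup_insertAt_ne_tupRev_of_add_eq hper hp hr hrun hrev hj1 hj hsum h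
      · exact tup_insertAt_ne_tupRev_of_add_eq hper hp hr hrun hrev (by omega) hj' (by omega)
          (tup_eq_tupRev_comm h)
    by_cases hs : p ≤ j + 3
    · have := add_eq_of_tup_insertAt_eq_tupRev_of_le hper hp3 hr hrun hj' hj hs
        (tup_eq_tupRev_comm h)
      omega
    exact hrev (r + j) (r + j') (by rwa [← hlow j (by omega), ← hlow j' (by omega)])

end InsertionIntoRun

/-- Theorem 5: if `S` is a good orientable sequence of order `n`, odd weight and
period `m`, and `T ∈ D⁻¹(S)` (so `T` has period `2m`, in which `1^((n+1)-4)`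
occurs exactly once, say at position `r`), then `E(T)` is a good orientable
sequence of order `n+1` of odd weight and of period `2m` if `m` is odd and
`2m+1` if `m` is even. -/
theorem extension_good (n m : ℕ) (s t : ℕ → Bool)
    (hgood : goodOS s n m) (hodd : Odd (wt s m)) (ht : t ∈ Dinv s) :
    ∃ r, r < 2 * m ∧ occOnes t (n + 1 - 4) r ∧
      (∀ i, i < 2 * m → occOnes t (n + 1 - 4) i → i = r) ∧
      goodOS (if Odd (wt t (2 * m)) then t else insertAt t (2 * m) r) (n + 1)
        (if Odd m then 2 * m else 2 * m + 1) ∧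
      Odd (wt (if Odd (wt t (2 * m)) then t else insertAt t (2 * m) r)
        (if Odd m then 2 * m else 2 * m + 1)) := by
  obtain ⟨hs, hzeros⟩ := hgood
  have hm := two_le_of_isOrientable hs
  obtain ⟨N, rfl⟩ : ∃ N, n = N + 4 := by
    refine ⟨n - 4, ?_⟩
    by_contra hn
    obtain ⟨i, -, huniq⟩ := hzeros
    have h01 := (huniq 0 ⟨by omega, fun _ _ => by omega⟩).trans
      (huniq 1 ⟨by omega, fun _ _ => by omega⟩).symm
    omega
  obtain rfl : Dmap t = s := ht
  have hsper : hasPer (Dmap t) m := hs.1.1.2.1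
  have hanti := antiperiodic_of_odd_wt_Dmap hsper hodd
  have hper := hasPer_two_mul_of_antiperiodic hanti
  have ht5 : isOrientable t (N + 5) (2 * m) := isOrientable_of_Dmap hs hanti
  obtain ⟨z0, hz0, hsz⟩ := hsper.exists_forall_occZeros_iff_modEq (by omega) hzeros
  obtain ⟨r, hr, hrun⟩ := exists_forall_occOnes_iff_modEq hanti hz0 hsz
  obtain ⟨z, -, hz⟩ := exists_forall_occOnes_iff_modEq (t := seqCompl t)
    (fun i => by simp [seqCompl, hanti]) hz0 (by rwa [Dmap_seqCompl])
  simp only [← occZeros_iff_occOnes_seqCompl] at hz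
  rw [show N + 4 + 1 - 4 = N + 1 by omega, wt_two_mul_of_antiperiodic hanti]
  refine ⟨r, hr, (hrun r).2 rfl, fun i hi h => ((hrun i).1 h).eq_of_lt_of_lt hi hr, ?_⟩
  rcases Nat.even_or_odd m with hme | hmo
  · obtain ⟨z', hz'⟩ := exists_forall_occZeros_insertAt_iff hper (by omega) hr hrun hz
    rw [if_neg (Nat.not_odd_iff_even.2 hme), if_neg (Nat.not_odd_iff_even.2 hme),
      wt_insertAt hr.le, wt_two_mul_of_antiperiodic hanti]
    exact ⟨⟨isOrientable_insertAt ht5 hr hrun,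
      existsUnique_lt_of_forall_iff_modEq (by omega) hz'⟩, hme.add_one⟩
  · rw [if_pos hmo, if_pos hmo, wt_two_mul_of_antiperiodic hanti]
    exact ⟨⟨ht5, existsUnique_lt_of_forall_iff_modEq (by omega) hz⟩, hmo⟩
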